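/- Let D be an MRDT implementation whose conflict-resolution relation rc has irreflexive transitive closure. Then for every reachable configuration C of the transition system of D, the transitive closure of the linearization relation lo_C is irreflexive. -/

import Mathlib

/-- An MRDT implementation `D = (Σ, σ₀, do, merge, rc)`. -/
structure MRDT (T R O : Type) where
  State : Type
  init : State
  doOp : State → T → R → O → State
  merge : State → State → State → State
  rc : O → O → Prop

/-- An event is a triple `(t, r, o)`. -/
abbrev Event (T R O : Type) := T × R × O

variable {T R O : Type}

/-- Applying an event to a state: `e(σ) = do σ t r o`. -/
def MRDT.applyEvent (D : MRDT T R O) (e : Event T R O) (σ : D.State) : D.State :=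
  D.doOp σ e.1 e.2.1 e.2.2

/-- Applying a finite sequence of events to a state. -/
def MRDT.applySeq (D : MRDT T R O) (π : List (Event T R O)) (σ : D.State) : D.State :=
  π.foldl (fun s e => D.applyEvent e s) σ

/-- A configuration `C = (N, H, L, G, vis)`; versions are natural numbers. -/
structure Config (T R O S : Type) where
  N : ℕ → Option S
  H : R → Option ℕ
  L : ℕ → Finset (Event T R O)
  E : ℕ → ℕ → Prop
  vis : Event T R O → Event T R O → Prop

/-- `E_C`: the set of events appearing at some version of `C`. -/
def Config.events {S : Type} (C : Config T R O S) : Set (Event T R O) :=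
  {e | ∃ v, (C.N v).isSome ∧ e ∈ C.L v}

/-- `vt` is a lowest common ancestor of `v1` and `v2` in the graph with
vertex set `V` and edge relation `E`. -/
def isLCA (V : ℕ → Prop) (E : ℕ → ℕ → Prop) (v1 v2 vt : ℕ) : Prop :=
  V vt ∧ Relation.ReflTransGen E vt v1 ∧ Relation.ReflTransGen E vt v2 ∧
    ∀ v, V v → Relation.ReflTransGen E v v1 → Relation.ReflTransGen E v v2 →
      Relation.ReflTransGen E v vt

variable [DecidableEq T] [DecidableEq R] [DecidableEq O]

/-- Result of a `CreateBranch` transition. -/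
def branchConfig (D : MRDT T R O) (C : Config T R O D.State)
    (r' : R) (vr v : ℕ) (σ : D.State) : Config T R O D.State where
  N := Function.update C.N v (some σ)
  H := Function.update C.H r' (some v)
  L := Function.update C.L v (C.L vr)
  E := fun u w => C.E u w ∨ (u = vr ∧ w = v)
  vis := C.vis

/-- Result of an `Apply` transition. -/
def applyConfig (D : MRDT T R O) (C : Config T R O D.State)
    (t : T) (r : R) (o : O) (vr v : ℕ) (σ : D.State) : Config T R O D.State where
  N := Function.update C.N v (some (D.applyEvent (t, r, o) σ))
  H := Function.update C.H r (some v)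
  L := Function.update C.L v (insert (t, r, o) (C.L vr))
  E := fun u w => C.E u w ∨ (u = vr ∧ w = v)
  vis := fun e1 e2 => C.vis e1 e2 ∨ (e1 ∈ C.L vr ∧ e2 = (t, r, o))

/-- Result of a `Merge` transition. -/
def mergeConfig (D : MRDT T R O) (C : Config T R O D.State)
    (r1 : R) (v1 v2 vt v : ℕ) (σt σ1 σ2 : D.State) : Config T R O D.State where
  N := Function.update C.N v (some (D.merge σt σ1 σ2))
  H := Function.update C.H r1 (some v)
  L := Function.update C.L v (C.L v1 ∪ C.L v2)
  E := fun u w => C.E u w ∨ ((u = v1 ∨ u = v2) ∧ w = v)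
  vis := C.vis

/-- The transition relation of the replicated datastore. -/
inductive Step (D : MRDT T R O) : Config T R O D.State → Config T R O D.State → Prop
  | createBranch (C : Config T R O D.State) (r r' : R) (vr v : ℕ) (σ : D.State)
      (hr : C.H r = some vr) (hσ : C.N vr = some σ)
      (hr' : C.H r' = none) (hv : C.N v = none) :
      Step D C (branchConfig D C r' vr v σ)
  | applyOp (C : Config T R O D.State) (t : T) (r : R) (o : O) (vr v : ℕ) (σ : D.State)
      (hr : C.H r = some vr) (hσ : C.N vr = some σ) (hv : C.N v = none)
      (ht : ∀ e' ∈ C.events, e'.1 ≠ t) :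
      Step D C (applyConfig D C t r o vr v σ)
  | mergeOp (C : Config T R O D.State) (r1 r2 : R) (v1 v2 vt v : ℕ) (σ1 σ2 σt : D.State)
      (h1 : C.H r1 = some v1) (h2 : C.H r2 = some v2)
      (hσ1 : C.N v1 = some σ1) (hσ2 : C.N v2 = some σ2) (hσt : C.N vt = some σt)
      (hlca : isLCA (fun u => (C.N u).isSome) C.E v1 v2 vt)
      (hv : C.N v = none) :
      Step D C (mergeConfig D C r1 v1 v2 vt v σt σ1 σ2)
  | queryOp (C : Config T R O D.State) : Step D C C

/-- The initial configuration, with a single replica `r0` and head version `0`. -/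
def initConfig (D : MRDT T R O) (r0 : R) : Config T R O D.State where
  N := fun u => if u = 0 then some D.init else none
  H := fun r => if r = r0 then some 0 else none
  L := fun _ => ∅
  E := fun _ _ => False
  vis := fun _ _ => False

/-- A configuration is reachable if obtained from the initial configuration
by a finite sequence of transitions. -/
def Reachable (D : MRDT T R O) (C : Config T R O D.State) : Prop :=
  ∃ r0 : R, Relation.ReflTransGen (Step D) (initConfig D r0) C

/-- Events `e, e'` commute: `e(e'(σ)) = e'(e(σ))` for all states. -/
def MRDT.Commute (D : MRDT T R O) (e e' : Event T R O) : Prop :=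
  ∀ σ : D.State, D.applyEvent e (D.applyEvent e' σ) = D.applyEvent e' (D.applyEvent e σ)

/-- The linearization relation `lo_C` on `E_C`. -/
def lo (D : MRDT T R O) (C : Config T R O D.State) (e1 e2 : Event T R O) : Prop :=
  e1 ∈ C.events ∧ e2 ∈ C.events ∧
    ((C.vis e1 e2 ∧ ¬ D.Commute e1 e2) ∨
     (¬ C.vis e1 e2 ∧ ¬ C.vis e2 e1 ∧ D.rc e1.2.2 e2.2.2 ∧
       ¬ ∃ e3, e3 ∈ C.events ∧ C.vis e2 e3 ∧ ¬ D.Commute e2 e3))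

/-- `e` occurs strictly before `e'` in the list `π`. -/
def precedes (π : List (Event T R O)) (e e' : Event T R O) : Prop :=
  ∃ i j : ℕ, i < j ∧ π[i]? = some e ∧ π[j]? = some e'

/-- A configuration is RA-linearizable. -/
def RALinConfig (D : MRDT T R O) (C : Config T R O D.State) : Prop :=
  ∀ r vr, C.H r = some vr →
    ∃ π : List (Event T R O), π.Nodup ∧ (∀ e, e ∈ π ↔ e ∈ C.L vr) ∧
      (∀ e e', e ∈ C.L vr → e' ∈ C.L vr → lo D C e e' → precedes π e e') ∧
      C.N vr = some (D.applySeq π D.init)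

/-- `rc-non-comm`. -/
def RcNonComm (D : MRDT T R O) : Prop :=
  ∀ o1 o2 : O,
    (∃ e1 e2 : Event T R O, e1.2.2 = o1 ∧ e2.2.2 = o2 ∧ ¬ D.Commute e1 e2) ↔
      (D.rc o1 o2 ∨ D.rc o2 o1)

/-- `cond-comm`. -/
def CondComm (D : MRDT T R O) : Prop :=
  ∀ o1 o2 o3 : O, D.rc o1 o2 →
    (∃ e2 e3 : Event T R O, e2.2.2 = o2 ∧ e3.2.2 = o3 ∧ ¬ D.Commute e2 e3) →
    ∀ e1 e2 e3 : Event T R O, e1.2.2 = o1 → e2.2.2 = o2 → e3.2.2 = o3 →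
      ∀ (σ : D.State) (π : List (Event T R O)),
        D.applyEvent e3 (D.applySeq π (D.applyEvent e1 (D.applyEvent e2 σ))) =
          D.applyEvent e3 (D.applySeq π (D.applyEvent e2 (D.applyEvent e1 σ)))

/-- `no-rc-chain`. -/
def NoRcChain (D : MRDT T R O) : Prop :=
  ¬ ∃ o1 o2 o3 : O, D.rc o1 o2 ∧ D.rc o2 o3

/-- A list of events has pairwise distinct timestamps. -/
def Distinct (l : List (Event T R O)) : Prop :=
  l.Pairwise (fun e e' => e.1 ≠ e'.1)

section Aux

variable {T R O : Type} [DecidableEq T] [DecidableEq R] [DecidableEq O] {D : MRDT T R O}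

/-- `e` has no non-commuting visible successor. -/
def Mmax (D : MRDT T R O) (C : Config T R O D.State) (e : Event T R O) : Prop :=
  ¬ ∃ e3, e3 ∈ C.events ∧ C.vis e e3 ∧ ¬ D.Commute e e3

lemma edge_of_M {C : Config T R O D.State} {a c : Event T R O}
    (ha : Mmax D C a) (h : lo D C a c) : D.rc a.2.2 c.2.2 ∧ Mmax D C c := by
  obtain ⟨_, hc, hvis | hrc⟩ := h
  · exact absurd ⟨c, hc, hvis.1, hvis.2⟩ ha
  · exact ⟨hrc.2.2.1, hrc.2.2.2⟩

lemma lemB {C : Config T R O D.State} {a b : Event T R O}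
    (h : Relation.TransGen (lo D C) a b) (ha : Mmax D C a) :
    Relation.TransGen (fun e1 e2 : Event T R O => D.rc e1.2.2 e2.2.2) a b := by
  induction h using Relation.TransGen.head_induction_on with
  | single h => exact Relation.TransGen.single (edge_of_M ha h).1
  | head h' _ ih =>
    rename_i a' c _
    obtain ⟨hr, hm⟩ := edge_of_M ha h'
    exact Relation.TransGen.head hr (ih hm)

lemma lemC {C : Config T R O D.State} {a b : Event T R O}
    (h : Relation.TransGen (lo D C) a b) :
    Relation.TransGen C.vis a b ∨
      ∃ c d, Relation.ReflTransGen (lo D C) a c ∧ lo D C c d ∧ Mmax D C d ∧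
        Relation.ReflTransGen (lo D C) d b := by
  induction h with
  | single h =>
    rename_i b1
    obtain ⟨ha', hb, hvis | hrc⟩ := h
    · exact Or.inl (Relation.TransGen.single hvis.1)
    · exact Or.inr ⟨a, b1, Relation.ReflTransGen.refl,
        ⟨ha', hb, Or.inr hrc⟩, hrc.2.2.2, Relation.ReflTransGen.refl⟩
  | tail hza hzb ih =>
    rename_i z b'
    rcases ih with hv | ⟨c, d, h1, h2, h3, h4⟩
    · obtain ⟨hz, hb, hvis | hrc⟩ := hzb
      · exact Or.inl (hv.tail hvis.1)
      · exact Or.inr ⟨z, b', hza.to_reflTransGen,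
          ⟨hz, hb, Or.inr hrc⟩, hrc.2.2.2, Relation.ReflTransGen.refl⟩
    · exact Or.inr ⟨c, d, h1, h2, h3, h4.tail hzb⟩

/-- Invariant: sources of `vis`-edges are events, and `vis` is acyclic. -/
def VisInv {D : MRDT T R O} (C : Config T R O D.State) : Prop :=
  (∀ e1 e2, C.vis e1 e2 → e1 ∈ C.events) ∧ (∀ e, ¬ Relation.TransGen C.vis e e)

lemma events_update {C : Config T R O D.State} {v : ℕ} (hv : C.N v = none)
    (s : Option D.State) (X : Finset (Event T R O)) {e : Event T R O}
    (he : e ∈ C.events) :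
    ∃ u, ((Function.update C.N v s) u).isSome ∧ e ∈ Function.update C.L v X u := by
  obtain ⟨u, hu, hL⟩ := he
  have huv : u ≠ v := by rintro rfl; rw [hv] at hu; simp at hu
  exact ⟨u, by simp [Function.update_of_ne huv, hu, hL]⟩

lemma inv_step {C C' : Config T R O D.State} (h : Step D C C') (hI : VisInv C) : VisInv C' := by
  cases h with
  | createBranch r r' vr v σ hr hσ hr' hv =>
    refine ⟨fun e1 e2 h12 => ?_, hI.2⟩
    exact events_update hv _ _ (hI.1 e1 e2 h12)
  | mergeOp r1 r2 v1 v2 vt v σ1 σ2 σt h1 h2 hσ1 hσ2 hσt hlca hv =>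
    refine ⟨fun e1 e2 h12 => ?_, hI.2⟩
    exact events_update hv _ _ (hI.1 e1 e2 h12)
  | queryOp => exact hI
  | applyOp t r o vr v σ hr hσ hv ht =>
    set e0 : Event T R O := (t, r, o) with he0
    have hmono : ∀ e ∈ C.events, e ∈ (applyConfig D C t r o vr v σ).events :=
      fun e he => events_update hv _ _ he
    have hnotev : e0 ∉ C.events := fun h => ht e0 h rfl
    have hLvr : ∀ e ∈ C.L vr, e ∈ C.events := fun e he => ⟨vr, by simp [hσ], he⟩
    constructor
    · rintro e1 e2 (h12 | ⟨h1, rfl⟩)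
      · exact hmono e1 (hI.1 e1 e2 h12)
      · exact hmono e1 (hLvr e1 h1)
    · -- acyclicity
      intro e hcyc
      have hout : ∀ y, (applyConfig D C t r o vr v σ).vis e0 y → False := by
        rintro y (hce | ⟨hce, _⟩)
        · exact hnotev (hI.1 e0 y hce)
        · exact hnotev (hLvr e0 hce)
      have key : ∀ x y, Relation.TransGen (applyConfig D C t r o vr v σ).vis x y →
          x ≠ e0 → Relation.TransGen C.vis x y ∨ y = e0 := by
        intro x y hxy
        induction hxy with
        | single h =>
          intro _
          rcases h with h | ⟨_, rfl⟩
          · exact Or.inl (Relation.TransGen.single h)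
          · exact Or.inr rfl
        | tail hxz hzy ih =>
          rename_i z y'
          intro hx
          rcases ih hx with hv' | rfl
          · rcases hzy with h | ⟨_, rfl⟩
            · exact Or.inl (hv'.tail h)
            · exact Or.inr rfl
          · exact absurd hzy (hout y')
      by_cases hx : e = e0
      · subst hx
        obtain ⟨c, hc, -⟩ := Relation.TransGen.head'_iff.mp hcyc
        exact hout c hc
      · rcases key e e hcyc hx with hv' | rfl
        · exact hI.2 e hv'
        · exact hx rfl

lemma inv_reachable {C : Config T R O D.State} (hC : Reachable D C) : VisInv C := by
  obtain ⟨r0, hsteps⟩ := hC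
  induction hsteps with
  | refl =>
    refine ⟨fun e1 e2 h => h.elim, fun e h => ?_⟩
    obtain ⟨c, hc, -⟩ := Relation.TransGen.head'_iff.mp h
    exact hc
  | tail _ hstep ih => exact inv_step hstep ih

end Aux

/-- if the transitive closure of `rc` is irreflexive, then for every
reachable configuration `C`, the transitive closure of `lo_C` is irreflexive. -/
theorem lo_transClosure_irrefl (T R O : Type) [DecidableEq T] [DecidableEq R] [DecidableEq O]
    (D : MRDT T R O)
    (hrc : ∀ o : O, ¬ Relation.TransGen D.rc o o)
    (C : Config T R O D.State) (hC : Reachable D C) :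
    ∀ e : Event T R O, ¬ Relation.TransGen (lo D C) e e := by
  intro e hcyc
  have hI := inv_reachable hC
  rcases lemC hcyc with hv | ⟨c, d, h1, h2, h3, h4⟩
  · exact hI.2 e hv
  · have hdd : Relation.TransGen (lo D C) d d :=
      Relation.TransGen.tail' (h4.trans h1) h2
    have := lemB hdd h3
    exact hrc d.2.2 (Relation.TransGen.lift (fun e : Event T R O => e.2.2)
      (fun _ _ h => h) _ _ this)
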